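/- arXiv:1612.07354 — 3 statements merged into one kernel-verified Lean document; each statement's English description precedes it below -/
import Mathlib

section
/- Every completely metrizable topological space with the Menger property is σ-compact. -/
/-- A topological space has the Menger property if for every sequence of open
covers there are finite subfamilies whose union covers the space. -/
def MengerSpace (X : Type*) [TopologicalSpace X] : Prop :=
  ∀ 𝒰 : ℕ → Set (Set X),
    (∀ n, (∀ s ∈ 𝒰 n, IsOpen s) ∧ ⋃₀ 𝒰 n = Set.univ) →
    ∃ ℱ : ℕ → Set (Set X),
      (∀ n, ℱ n ⊆ 𝒰 n ∧ (ℱ n).Finite) ∧ ⋃ n, ⋃₀ ℱ n = Set.univ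

/-!
Hurewicz's argument. A Menger space is Lindelöf, so the points of a metric Menger space `X`
having no σ-compact neighbourhood form a set `Y` whose complement lies in a σ-compact set; if
`Y = ∅`, then `X` is σ-compact. Otherwise completeness shows that no ball around a point of `Y`
meets `Y` in a totally bounded set, so each such ball contains infinitely many uniformly separated
points of `Y`, and small closed balls around them form a locally finite family. Iterating gives a
tree of closed balls indexed by finite sequences of naturals, with locally finite levels and
branches shrinking to points of `X`. The increasing open covers
`V n k = X \ closure (⋃ {level-(n+1) balls whose last index is ≥ k})` defeat the Menger property:
for any choice `k = b n` of members, the point of the branch `b` is missed.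
-/

open Set Metric Filter Topology

section Topological

variable {X : Type*} [TopologicalSpace X]

theorem MengerSpace.exists_finite_subfamilies {ι : ℕ → Type*} (hM : MengerSpace X)
    (U : ∀ n, ι n → Set X) (hUo : ∀ n i, IsOpen (U n i)) (hU : ∀ n, ⋃ i, U n i = univ) :
    ∃ t : ∀ n, Set (ι n), (∀ n, (t n).Finite) ∧ ⋃ n, ⋃ i ∈ t n, U n i = univ := by
  obtain ⟨F, hF, hcov⟩ := hM (fun n => range (U n))
    fun n => ⟨forall_mem_range.2 (hUo n), by rw [sUnion_range, hU n]⟩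
  have hFt : ∀ n, ∃ t : Set (ι n), t.Finite ∧ U n '' t = F n := fun n => by
    obtain ⟨t, -, ht, hFt⟩ :=
      exists_subset_image_finite_and.1 ⟨F n, by rw [image_univ]; exact (hF n).1, (hF n).2, rfl⟩
    exact ⟨t, ht, hFt.symm⟩
  choose t ht hFt using hFt
  refine ⟨t, ht, ?_⟩
  simpa only [← sUnion_image, hFt] using hcov

theorem MengerSpace.lindelofSpace (hM : MengerSpace X) : LindelofSpace X where
  isLindelof_univ := isLindelof_of_countable_subcover fun U hUo hU => by
    obtain ⟨t, ht, hcov⟩ := hM.exists_finite_subfamilies (fun _ => U) (fun _ => hUo)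
      fun _ => univ_subset_iff.1 hU
    exact ⟨⋃ n, t n, countable_iUnion fun n => (ht n).countable, by
      rw [biUnion_iUnion, hcov]⟩

theorem MengerSpace.exists_iUnion_eq_univ_of_monotone (hM : MengerSpace X) {V : ℕ → ℕ → Set X}
    (hVo : ∀ n k, IsOpen (V n k)) (hV : ∀ n, Monotone (V n)) (hVcov : ∀ n, ⋃ k, V n k = univ) :
    ∃ b : ℕ → ℕ, ⋃ n, V n (b n) = univ := by
  obtain ⟨t, ht, hcov⟩ := hM.exists_finite_subfamilies V hVo hVcov
  choose b hb using fun n => (ht n).bddAbove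
  refine ⟨b, univ_subset_iff.1 (hcov.symm.subset.trans (iUnion_mono fun n => ?_))⟩
  exact iUnion₂_subset fun k hk => hV n (hb n hk)

theorem LocallyFinite.prod_of_subset {ι κ : Type*} {f : ι → Set X} {g : ι → κ → Set X}
    (hf : LocallyFinite f) (hg : ∀ i, LocallyFinite (g i)) (hgf : ∀ i j, g i j ⊆ f i) :
    LocallyFinite fun p : ι × κ => g p.1 p.2 := by
  intro x
  obtain ⟨U, hU, hUfin⟩ := hf x
  choose V hV hVfin using fun i => hg i x
  refine ⟨U ∩ ⋂ i ∈ {i | (f i ∩ U).Nonempty}, V i,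
    inter_mem hU ((biInter_mem hUfin).2 fun i _ => hV i),
    (hUfin.prod (hUfin.biUnion fun i _ => hVfin i)).subset ?_⟩
  rintro ⟨i, j⟩ ⟨z, hzg, hzU, hzV⟩
  have hi : (f i ∩ U).Nonempty := ⟨z, hgf i j hzg, hzU⟩
  exact ⟨hi, mem_biUnion hi ⟨z, hzg, mem_iInter₂.1 hzV i hi⟩⟩

def treeNode {α : Type*} (child : α → ℕ → α) (root : α) : (n : ℕ) → (Fin n → ℕ) → α
  | 0, _ => root
  | n + 1, v => child (treeNode child root n (Fin.init v)) (v (Fin.last n))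

theorem locallyFinite_treeNode {α : Type*} {child : α → ℕ → α} (root : α) {S : α → Set X}
    (hS : ∀ a, LocallyFinite fun i => S (child a i)) (hsub : ∀ a i, S (child a i) ⊆ S a) :
    ∀ n, LocallyFinite fun v => S (treeNode child root n v)
  | 0 => locallyFinite_of_finite _
  | n + 1 => by
    have hinj : Function.Injective fun v : Fin (n + 1) → ℕ => (Fin.init v, v (Fin.last n)) :=
      fun v w hvw => by
        rw [← Fin.snoc_init_self v, ← Fin.snoc_init_self w]
        simp only [Prod.mk.injEq] at hvw
        rw [hvw.1, hvw.2]
    exact ((locallyFinite_treeNode root hS hsub n).prod_of_subset (fun a => hS _)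
      fun a i => hsub _ i).comp_injective hinj

theorem not_mengerSpace_of_locallyFinite_scheme (C : (n : ℕ) → (Fin n → ℕ) → Set X)
    (hC : ∀ n, LocallyFinite (C n)) (hbranch : ∀ b : ℕ → ℕ, (⋂ n, C n fun i => b i).Nonempty) :
    ¬MengerSpace X := by
  intro hM
  set V : ℕ → ℕ → Set X := fun n k =>
    (closure (⋃ (v : Fin (n + 1) → ℕ) (_ : k ≤ v (Fin.last n)), C (n + 1) v))ᶜ
  have hVcov : ∀ n, ⋃ k, V n k = univ := by
    refine fun n => eq_univ_of_forall fun x => ?_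
    obtain ⟨U, hU, hUfin⟩ := hC (n + 1) x
    obtain ⟨N, hN⟩ := (hUfin.image fun v => v (Fin.last n)).bddAbove
    refine mem_iUnion.2 ⟨N + 1, fun hx => ?_⟩
    obtain ⟨z, hzU, hz⟩ := mem_closure_iff_nhds.1 hx U hU
    obtain ⟨v, hv, hzv⟩ := mem_iUnion₂.1 hz
    have : v (Fin.last n) ≤ N := hN ⟨v, ⟨z, hzv, hzU⟩, rfl⟩
    omega
  have hVmono : ∀ n, Monotone (V n) := fun n k k' hkk' =>
    compl_subset_compl.2 <| closure_mono <| iUnion₂_mono' fun v hk => ⟨v, hkk'.trans hk, subset_rfl⟩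
  obtain ⟨b, hb⟩ := hM.exists_iUnion_eq_univ_of_monotone
    (fun n k => isClosed_closure.isOpen_compl) hVmono hVcov
  obtain ⟨x, hx⟩ := hbranch b
  obtain ⟨n, hxn⟩ := mem_iUnion.1 (hb ▸ mem_univ x)
  exact hxn (subset_closure (mem_biUnion (le_refl (b n)) (mem_iInter.1 hx (n + 1))))

theorem IsSigmaCompact.union {s t : Set X} (hs : IsSigmaCompact s) (ht : IsSigmaCompact t) :
    IsSigmaCompact (s ∪ t) := by
  rw [union_eq_iUnion]
  exact isSigmaCompact_iUnion _ fun b => by cases b <;> assumption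

end Topological

section Locus

variable (X : Type*) [TopologicalSpace X]

def nonSigmaCompactLocus : Set X := {x | ∀ U ∈ 𝓝 x, ¬IsSigmaCompact U}

variable {X} [HereditarilyLindelofSpace X]

theorem exists_isSigmaCompact_superset_compl_nonSigmaCompactLocus :
    ∃ S, IsSigmaCompact S ∧ (nonSigmaCompactLocus X)ᶜ ⊆ S := by
  have hU : ∀ x ∈ (nonSigmaCompactLocus X)ᶜ, ∃ U ∈ 𝓝 x, IsSigmaCompact U := fun x hx => by
    simpa [nonSigmaCompactLocus] using hx
  choose U hU hUσ using hU
  obtain ⟨t, ht, hcov⟩ := (HereditarilyLindelofSpace.isLindelof _).elim_nhds_subcover' U hU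
  exact ⟨⋃ x ∈ t, U x x.2, isSigmaCompact_biUnion ht fun x _ => hUσ x x.2, hcov⟩

theorem sigmaCompactSpace_of_nonSigmaCompactLocus_eq_empty (h : nonSigmaCompactLocus X = ∅) :
    SigmaCompactSpace X := by
  obtain ⟨S, hS, hsub⟩ := exists_isSigmaCompact_superset_compl_nonSigmaCompactLocus (X := X)
  rw [h, compl_empty, univ_subset_iff] at hsub
  exact isSigmaCompact_univ_iff.1 (hsub ▸ hS)

end Locus

section PseudoMetric

variable {X : Type*} [PseudoMetricSpace X]

theorem not_totallyBounded_ball_inter_nonSigmaCompactLocus [CompleteSpace X]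
    [HereditarilyLindelofSpace X] {x : X} (hx : x ∈ nonSigmaCompactLocus X) {r : ℝ} (hr : 0 < r) :
    ¬TotallyBounded (ball x r ∩ nonSigmaCompactLocus X) := by
  intro h
  obtain ⟨S, hS, hsub⟩ := exists_isSigmaCompact_superset_compl_nonSigmaCompactLocus (X := X)
  refine hx _ (mem_of_superset (ball_mem_nhds x hr) fun y hy => ?_)
    ((h.closure.isCompact_of_isClosed isClosed_closure).isSigmaCompact.union hS)
  by_cases hy' : y ∈ nonSigmaCompactLocus X
  · exact Or.inl (subset_closure ⟨hy, hy'⟩)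
  · exact Or.inr (hsub hy')

theorem exists_seq_pairwise_le_dist_of_not_totallyBounded {A : Set X} (h : ¬TotallyBounded A) :
    ∃ ε > 0, ∃ p : ℕ → X, (∀ n, p n ∈ A) ∧ Pairwise fun m n => ε ≤ dist (p m) (p n) := by
  obtain ⟨ε, hε, hA⟩ : ∃ ε > 0, ∀ t : Set X, t.Finite → ¬A ⊆ ⋃ y ∈ t, ball y ε := by
    simpa [Metric.totallyBounded_iff] using h
  have hsymm : Std.Symm fun x y : X => ε ≤ dist x y := ⟨fun x y h => dist_comm x y ▸ h⟩
  refine ⟨ε, hε, exists_seq_of_forall_finset_exists' (· ∈ A) (fun x y => ε ≤ dist x y)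
    fun t _ => ?_⟩
  obtain ⟨y, hyA, hy⟩ := not_subset.1 (hA t t.finite_toSet)
  exact ⟨y, hyA, fun x hx => not_lt.1 fun hxy => hy (mem_biUnion hx (mem_ball'.2 hxy))⟩

theorem locallyFinite_closedBall_of_pairwise_le_dist {ι : Type*} {p : ι → X} {ε ρ : ℝ}
    (hε : 0 < ε) (hp : Pairwise fun i j => ε ≤ dist (p i) (p j)) (hρ : ρ ≤ ε / 4) :
    LocallyFinite fun i => closedBall (p i) ρ := by
  intro x
  refine ⟨ball x (ε / 4), ball_mem_nhds x (by positivity), Subsingleton.finite ?_⟩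
  rintro i ⟨y, hyi, hyx⟩ j ⟨z, hzj, hzx⟩
  by_contra hij
  have := hp hij
  rw [mem_closedBall] at hyi hzj
  rw [mem_ball] at hyx hzx
  have := dist_triangle4 (p i) y z (p j)
  have := dist_triangle_right y z x
  rw [dist_comm] at hyi
  linarith

theorem exists_locallyFinite_closedBalls_of_not_totallyBounded {Y : Set X} {x : X} {r : ℝ}
    (hr : 0 < r) (h : ¬TotallyBounded (ball x (r / 2) ∩ Y)) :
    ∃ p : ℕ → X, ∃ ρ > 0, ρ ≤ r / 2 ∧ (∀ i, p i ∈ Y ∧ closedBall (p i) ρ ⊆ closedBall x r) ∧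
      LocallyFinite fun i => closedBall (p i) ρ := by
  obtain ⟨ε, hε, p, hpA, hp⟩ := exists_seq_pairwise_le_dist_of_not_totallyBounded h
  refine ⟨p, min (ε / 4) (r / 2), by positivity, min_le_right _ _, fun i => ⟨(hpA i).2, ?_⟩,
    locallyFinite_closedBall_of_pairwise_le_dist hε hp (min_le_left _ _)⟩
  refine closedBall_subset_closedBall' ?_
  have := mem_ball.1 (hpA i).1
  linarith [min_le_right (ε / 4) (r / 2)]

theorem nonempty_iInter_closedBall_of_tendsto [CompleteSpace X] {c : ℕ → X} {r : ℕ → ℝ}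
    (hsub : ∀ n, closedBall (c (n + 1)) (r (n + 1)) ⊆ closedBall (c n) (r n))
    (hr0 : ∀ n, 0 ≤ r n) (hr : Tendsto r atTop (𝓝 0)) :
    (⋂ n, closedBall (c n) (r n)).Nonempty := by
  have hanti : Antitone fun n => closedBall (c n) (r n) := antitone_nat_of_succ_le hsub
  refine nonempty_iInter_of_nonempty_biInter (fun n => isClosed_closedBall)
    (fun n => isBounded_closedBall) (fun N => ⟨c N, mem_iInter₂.2 fun n hn =>
      hanti hn (mem_closedBall_self (hr0 N))⟩) ?_
  refine squeeze_zero (fun n => diam_nonneg) (fun n => diam_closedBall (hr0 n)) ?_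
  simpa using hr.const_mul 2

theorem exists_locallyFinite_scheme_of_not_totallyBounded [CompleteSpace X] {Y : Set X}
    (hne : Y.Nonempty) (hY : ∀ x ∈ Y, ∀ r > 0, ¬TotallyBounded (ball x r ∩ Y)) :
    ∃ C : (n : ℕ) → (Fin n → ℕ) → Set X,
      (∀ n, LocallyFinite (C n)) ∧ ∀ b : ℕ → ℕ, (⋂ n, C n fun i => b i).Nonempty := by
  have hchild : ∀ a : Y × Ioi (0 : ℝ), ∃ c : ℕ → Y × Ioi (0 : ℝ),
      (∀ i, ((c i).2 : ℝ) ≤ a.2 / 2 ∧ closedBall ((c i).1 : X) (c i).2 ⊆ closedBall a.1 a.2) ∧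
      LocallyFinite fun i => closedBall ((c i).1 : X) (c i).2 := by
    rintro ⟨⟨x, hx⟩, ⟨r, hr⟩⟩
    obtain ⟨p, ρ, hρ, hρr, hp, hlf⟩ :=
      exists_locallyFinite_closedBalls_of_not_totallyBounded hr (hY x hx _ (half_pos hr))
    exact ⟨fun i => (⟨p i, (hp i).1⟩, ⟨ρ, hρ⟩), fun i => ⟨hρr, (hp i).2⟩, hlf⟩
  choose child hchild hlf using hchild
  obtain ⟨x₀, hx₀⟩ := hne
  let root : Y × Ioi (0 : ℝ) := (⟨x₀, hx₀⟩, ⟨1, mem_Ioi.2 one_pos⟩)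
  refine ⟨fun n v => closedBall (treeNode child root n v).1 (treeNode child root n v).2,
    locallyFinite_treeNode (S := fun a : Y × Ioi (0 : ℝ) => closedBall (a.1 : X) a.2) root hlf
      fun a i => (hchild a i).2, fun b => ?_⟩
  have hrad : ∀ n, ((treeNode child root n fun i => b i).2 : ℝ) ≤ (1 / 2) ^ n := by
    intro n
    induction n with
    | zero => simp [treeNode, root]
    | succ n ih =>
      calc _ ≤ ((treeNode child root n fun i => b i).2 : ℝ) / 2 := (hchild _ _).1
        _ ≤ (1 / 2) ^ (n + 1) := by rw [pow_succ]; linarith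
  refine nonempty_iInter_closedBall_of_tendsto (fun n => (hchild _ _).2)
    (fun n => (treeNode child root n _).2.2.le) ?_
  exact squeeze_zero (fun n => (treeNode child root n _).2.2.le) hrad
    (tendsto_pow_atTop_nhds_zero_of_lt_one (by norm_num) (by norm_num))

theorem MengerSpace.sigmaCompactSpace [CompleteSpace X] (hM : MengerSpace X) :
    SigmaCompactSpace X := by
  have := hM.lindelofSpace
  rcases (nonSigmaCompactLocus X).eq_empty_or_nonempty with h | hne
  · exact sigmaCompactSpace_of_nonSigmaCompactLocus_eq_empty h
  · obtain ⟨C, hC, hbranch⟩ := exists_locallyFinite_scheme_of_not_totallyBounded hne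
      fun x hx r hr => not_totallyBounded_ball_inter_nonSigmaCompactLocus hx hr
    exact absurd hM (not_mengerSpace_of_locallyFinite_scheme C hC hbranch)

end PseudoMetric

/-- Every completely metrizable topological space with the Menger property is
σ-compact. -/
theorem menger_completelyMetrizable_sigmaCompact (X : Type*) [t : TopologicalSpace X]
    (hmetr : ∃ m : MetricSpace X,
      m.toUniformSpace.toTopologicalSpace = t ∧ @CompleteSpace X m.toUniformSpace)
    (hMenger : MengerSpace X) :
    SigmaCompactSpace X := by
  obtain ⟨m, rfl, hcomplete⟩ := hmetr
  exact hMenger.sigmaCompactSpace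
end

section
/- Every analytic subspace of a Polish space that has the Menger property is σ-compact. -/
open Set Filter Topology Metric PiNat Function

section Menger

variable {Y Z : Type*} [TopologicalSpace Y] [TopologicalSpace Z]

theorem MengerSpace.of_surjective (hY : MengerSpace Y) {g : Y → Z} (hg : Continuous g)
    (hsurj : Surjective g) : MengerSpace Z := by
  intro 𝒰 h𝒰
  obtain ⟨ℱ, hℱ, hcover⟩ := hY (fun n => preimage g '' 𝒰 n) fun n =>
    ⟨forall_mem_image.2 fun U hU => ((h𝒰 n).1 U hU).preimage hg, by
      rw [sUnion_image, ← preimage_iUnion₂, ← sUnion_eq_biUnion, (h𝒰 n).2, preimage_univ]⟩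
  refine ⟨fun n => {U ∈ 𝒰 n | g ⁻¹' U ∈ ℱ n}, fun n => ⟨sep_subset _ _, ?_⟩, ?_⟩
  · exact ((hℱ n).2.preimage hsurj.preimage_injective.injOn).subset fun U hU => hU.2
  · refine eq_univ_of_forall fun z => ?_
    obtain ⟨y, rfl⟩ := hsurj z
    obtain ⟨n, V, hV, hyV⟩ : ∃ n, ∃ V ∈ ℱ n, y ∈ V := by
      simpa using eq_univ_iff_forall.1 hcover y
    obtain ⟨U, hU, rfl⟩ := (hℱ n).1 hV
    exact mem_iUnion.2 ⟨n, U, ⟨hU, hV⟩, hyV⟩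

/-- A cover of `F` extends to a cover of `Y`: the open sets of `Y` whose traces lie in it, and
`Fᶜ`. -/
theorem MengerSpace.of_isClosed (hY : MengerSpace Y) {F : Set Y} (hF : IsClosed F) :
    MengerSpace F := by
  intro 𝒰 h𝒰
  let 𝒱 : ℕ → Set (Set Y) := fun n => insert Fᶜ {W | IsOpen W ∧ (↑) ⁻¹' W ∈ 𝒰 n}
  have h𝒱 : ∀ n, (∀ s ∈ 𝒱 n, IsOpen s) ∧ ⋃₀ 𝒱 n = univ := by
    refine fun n => ⟨forall_mem_insert.2 ⟨hF.isOpen_compl, fun W hW => hW.1⟩,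
      eq_univ_of_forall fun y => ?_⟩
    by_cases hy : y ∈ F
    · obtain ⟨U, hU, hyU⟩ := mem_sUnion.1 ((h𝒰 n).2.symm ▸ mem_univ (⟨y, hy⟩ : F))
      obtain ⟨W, hW, rfl⟩ := isOpen_induced_iff.1 ((h𝒰 n).1 U hU)
      exact ⟨W, mem_insert_of_mem _ ⟨hW, hU⟩, hyU⟩
    · exact ⟨Fᶜ, mem_insert _ _, hy⟩
  obtain ⟨ℱ, hℱ, hcover⟩ := hY 𝒱 h𝒱
  refine ⟨fun n => preimage (↑) '' {W ∈ ℱ n | (↑) ⁻¹' W ∈ 𝒰 n}, fun n => ⟨?_, ?_⟩, ?_⟩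
  · exact forall_mem_image.2 fun W hW => hW.2
  · exact ((hℱ n).2.subset (sep_subset _ _)).image _
  · refine eq_univ_of_forall fun y => ?_
    obtain ⟨n, W, hW, hyW⟩ : ∃ n, ∃ W ∈ ℱ n, (y : Y) ∈ W := by
      simpa using eq_univ_iff_forall.1 hcover y
    rcases (hℱ n).1 hW with rfl | hW𝒰
    · exact absurd y.2 hyW
    · exact mem_iUnion.2 ⟨n, _, ⟨W, ⟨hW, hW𝒰.2⟩, rfl⟩, hyW⟩

theorem MengerSpace.of_isEmbedding {A : Set Y} (hA : MengerSpace A) {e : Z → Y}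
    (he : IsEmbedding e) (heA : range e ⊆ A) (hclosed : closure (range e) ∩ A ⊆ range e) :
    MengerSpace Z := by
  let C : Set A := (↑) ⁻¹' range e
  have hC : IsClosed C := isClosed_induced_iff.2 ⟨closure (range e), isClosed_closure,
    Subset.antisymm (fun a ha => hclosed ⟨ha, a.2⟩) fun _ ha => subset_closure ha⟩
  refine (hA.of_isClosed hC).of_surjective (g := fun c => he.toHomeomorph.symm ⟨c.1, c.2⟩)
    (he.toHomeomorph.symm.continuous.comp (by fun_prop)) fun z => ?_
  refine ⟨⟨⟨e z, heA ⟨z, rfl⟩⟩, z, rfl⟩, ?_⟩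
  exact he.toHomeomorph.symm_apply_eq.2 rfl

end Menger

/-- The covers `{σ | σ n ≤ j}`, `j ∈ ℕ`, witness that Baire space is not Menger: finitely many
members of the `n`-th cover bound `σ n`, and a point above all these bounds is not covered. -/
theorem not_mengerSpace_nat_nat : ¬ MengerSpace (ℕ → ℕ) := by
  intro hM
  let U : ℕ → ℕ → Set (ℕ → ℕ) := fun n j => (fun σ => σ n) ⁻¹' Iic j
  have hU : ∀ n, Injective (U n) := fun n =>
    (surjective_eval n).preimage_injective.comp Iic_injective
  obtain ⟨ℱ, hℱ, hcover⟩ := hM (fun n => range (U n)) fun n =>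
    ⟨forall_mem_range.2 fun j => isOpen_discrete _ |>.preimage (continuous_apply n),
      eq_univ_of_forall fun σ => ⟨U n (σ n), mem_range_self _, by simp [U]⟩⟩
  choose b hb using fun n => ((hℱ n).2.preimage (hU n).injOn).bddAbove
  obtain ⟨n, V, hV, hbV⟩ : ∃ n, ∃ V ∈ ℱ n, (fun n => b n + 1) ∈ V := by
    simpa using eq_univ_iff_forall.1 hcover fun n => b n + 1
  obtain ⟨j, rfl⟩ := (hℱ n).1 hV
  have : j ≤ b n := hb n hV
  exact absurd hbV (by simpa [U] using this)

section BaireSpace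

lemma exists_cylinder_subset_of_mem_nhds {σ : ℕ → ℕ} {U : Set (ℕ → ℕ)} (hU : U ∈ 𝓝 σ) :
    ∃ n, cylinder σ n ⊆ U := by
  obtain ⟨_, ⟨x, n, rfl⟩, hσ, hsub⟩ := (isTopologicalBasis_cylinders _).mem_nhds_iff.1 hU
  exact ⟨n, mem_cylinder_iff_eq.1 hσ ▸ hsub⟩

lemma countable_setOf_cylinder : {C : Set (ℕ → ℕ) | ∃ x n, C = cylinder x n}.Countable := by
  refine (countable_range fun p : ℕ × List ℕ => {σ | res σ p.1 = p.2}).mono ?_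
  rintro _ ⟨x, n, rfl⟩
  exact ⟨(n, res x n), (cylinder_eq_res x n).symm⟩

lemma continuous_comp_res {Y : Type*} [TopologicalSpace Y] (g : List ℕ → Y) (n : ℕ) :
    Continuous fun σ : ℕ → ℕ => g (res σ n) := by
  refine IsLocallyConstant.continuous <| (IsLocallyConstant.iff_eventually_eq _).2 fun σ => ?_
  filter_upwards [(isOpen_cylinder _ σ n).mem_nhds (self_mem_cylinder σ n)] with τ hτ
  rw [cylinder_eq_res] at hτ
  rw [hτ]

lemma exists_isCompact_or_infinite_branching (σ : ℕ → ℕ → ℕ) :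
    (∃ K : Set (ℕ → ℕ), IsCompact K ∧ ∀ k, σ k ∈ K) ∨
      ∃ n s, {v | ∃ k, res (σ k) (n + 1) = v :: s}.Infinite := by
  refine or_iff_not_imp_right.2 fun H => ?_
  simp only [not_exists, not_infinite] at H
  have hres : ∀ n, (range fun k => res (σ k) n).Finite := by
    intro n
    induction n with
    | zero => exact (finite_singleton []).subset (range_subset_iff.2 fun _ => rfl)
    | succ n ih =>
      refine (ih.biUnion fun s _ => (H n s).image (· :: s)).subset ?_
      rintro _ ⟨k, rfl⟩
      exact mem_biUnion (mem_range_self k) ⟨σ k n, ⟨k, rfl⟩, rfl⟩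
  have hcoord : ∀ n, (range fun k => σ k n).Finite := fun n =>
    ((hres (n + 1)).image fun l => l.headD 0).subset <|
      range_subset_iff.2 fun k => ⟨_, ⟨k, rfl⟩, rfl⟩
  exact ⟨univ.pi fun n => range fun k => σ k n,
    isCompact_univ_pi fun n => (hcoord n).isCompact, fun k => mem_univ_pi.2 fun n => ⟨k, rfl⟩⟩

end BaireSpace

/-- Equivalently, in a first countable space: every point of `Y` has a neighbourhood meeting only
finitely many of the sets `V j`. -/
def NoAccumulationIn {X : Type*} [TopologicalSpace X] (V : ℕ → Set X) (Y : Set X) : Prop :=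
  ∀ ψ : ℕ → ℕ, Injective ψ → ∀ x : ℕ → X, (∀ j, x j ∈ V (ψ j)) →
    ∀ a ∈ Y, ¬ Tendsto x atTop (𝓝 a)

lemma NoAccumulationIn.mono {X : Type*} [TopologicalSpace X] {V W : ℕ → Set X} {Y Z : Set X}
    (hV : NoAccumulationIn V Y) (hWV : ∀ j, W j ⊆ V j) (hZY : Z ⊆ Y) : NoAccumulationIn W Z :=
  fun ψ hψ x hx a ha => hV ψ hψ x (fun j => hWV _ (hx j)) a (hZY ha)

section Metric

variable {X : Type*} [MetricSpace X]

lemma exists_separated_or_tendsto_notMem [CompleteSpace X] {L Y : Set X}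
    (hL : ∀ K, IsCompact K → L ⊆ K → ¬ K ⊆ Y) :
    (∃ ε > 0, ∃ c : ℕ → X, (∀ j, c j ∈ L) ∧ Pairwise fun i j => ε ≤ dist (c i) (c j)) ∨
      ∃ y ∉ Y, ∃ c : ℕ → X, (∀ j, c j ∈ L) ∧ Tendsto c atTop (𝓝 y) := by
  by_cases hTB : TotallyBounded L
  · obtain ⟨y, hyL, hyY⟩ := not_subset.1 <|
      hL _ (hTB.closure.isCompact_of_isClosed isClosed_closure) subset_closure
    exact .inr ⟨y, hyY, mem_closure_iff_seq_limit.1 hyL⟩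
  · obtain ⟨ε, hε, hL⟩ : ∃ ε > 0, ∀ t : Set X, t.Finite → ¬ L ⊆ ⋃ y ∈ t, ball y ε := by
      simpa [Metric.totallyBounded_iff] using hTB
    obtain ⟨c, hc⟩ := seq_of_forall_finite_exists
      (P := fun x t => x ∈ L ∧ ∀ z ∈ t, ε ≤ dist x z) fun t ht => by
        simpa [not_subset, dist_comm] using hL t ht
    refine .inl ⟨ε, hε, c, fun j => (hc j).1, ?_⟩
    refine fun i j hij => hij.lt_or_gt.elim (fun h => ?_) fun h => (hc i).2 _ ⟨j, h, rfl⟩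
    exact (dist_comm (c i) (c j)).trans_ge ((hc j).2 _ ⟨i, h, rfl⟩)

lemma noAccumulationIn_ball_of_separated {ε : ℝ} {c : ℕ → X}
    (hc : Pairwise fun i j => ε ≤ dist (c i) (c j)) :
    Pairwise (Disjoint on fun j => ball (c j) (ε / 3)) ∧
      NoAccumulationIn (fun j => ball (c j) (ε / 3)) univ := by
  refine ⟨fun i j hij => disjoint_left.2 fun z hzi hzj => ?_, fun ψ hψ x hx a _ hxa => ?_⟩
  · have hzi : dist z (c i) < ε / 3 := hzi
    have hzj : dist z (c j) < ε / 3 := hzj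
    have hcij : ε ≤ dist (c i) (c j) := hc hij
    linarith [dist_triangle_left (c i) (c j) z, @dist_nonneg _ _ z (c i)]
  · have hx' : ∀ j, dist (x j) (c (ψ j)) < ε / 3 := hx
    have hε : 0 < ε / 6 := by linarith [hx' 0, @dist_nonneg _ _ (x 0) (c (ψ 0))]
    obtain ⟨N, hN⟩ := Metric.tendsto_atTop.1 hxa (ε / 6) hε
    have h₁ := hN N le_rfl
    have h₂ := hN (N + 1) N.le_succ
    have hc' : ε ≤ dist (c (ψ N)) (c (ψ (N + 1))) := hc (hψ.ne (Nat.succ_ne_self N).symm)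
    linarith [hx' N, hx' (N + 1), dist_triangle4 (c (ψ N)) (x N) a (x (N + 1)),
      dist_triangle (c (ψ N)) (x (N + 1)) (c (ψ (N + 1))), dist_comm (x (N + 1)) a,
      dist_comm (c (ψ N)) (x N)]


/-- `u` is chosen with `dist (c (u n)) y ≤ dist (c (u m)) y / 2` for `m < n`. -/
lemma exists_noAccumulationIn_ball_of_tendsto {c : ℕ → X} {y : X}
    (hc : Tendsto c atTop (𝓝 y)) (hne : ∀ j, c j ≠ y) :
    ∃ u : ℕ → ℕ, Pairwise (Disjoint on fun j => ball (c (u j)) (dist (c (u j)) y / 3)) ∧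
      NoAccumulationIn (fun j => ball (c (u j)) (dist (c (u j)) y / 3)) {y}ᶜ := by
  have hpos : ∀ k, 0 < dist (c k) y := fun k => dist_pos.2 (hne k)
  have hlim : Tendsto (fun k => dist (c k) y) atTop (𝓝 0) := tendsto_iff_dist_tendsto_zero.1 hc
  obtain ⟨u, hu⟩ := seq_of_forall_finite_exists
    (P := fun k s => ∀ i ∈ s, dist (c k) y ≤ dist (c i) y / 2) fun s hs =>
      ((eventually_all_finite hs).2 fun i _ =>
        hlim.eventually (ge_mem_nhds (half_pos (hpos i)))).exists
  have hhalf : ∀ m n, m < n → dist (c (u n)) y ≤ dist (c (u m)) y / 2 :=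
    fun m n h => hu n _ ⟨m, h, rfl⟩
  have hu_inj : Injective u := .of_lt_imp_ne fun m n h he => by
    have := hhalf m n h
    rw [he] at this
    linarith [hpos (u n)]
  refine ⟨u, (pairwise_disjoint_on _).2 fun m n h => disjoint_left.2 fun z hzm hzn => ?_,
    fun ψ hψ x hx a ha hxa => ha ?_⟩
  · have hzm : dist z (c (u m)) < dist (c (u m)) y / 3 := hzm
    have hzn : dist z (c (u n)) < dist (c (u n)) y / 3 := hzn
    linarith [hhalf m n h, dist_triangle4 (c (u m)) z (c (u n)) y, dist_comm z (c (u m))]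
  · have hx' : ∀ j, dist (x j) y ≤ 4 / 3 * dist (c (u (ψ j))) y := fun j => by
      have : dist (x j) (c (u (ψ j))) < dist (c (u (ψ j))) y / 3 := hx j
      linarith [dist_triangle (x j) (c (u (ψ j))) y]
    have hxy : Tendsto x atTop (𝓝 y) := tendsto_iff_dist_tendsto_zero.2 <|
      squeeze_zero (fun _ => dist_nonneg) hx' <| by
        simpa using ((hlim.comp (hu_inj.comp hψ).nat_tendsto_atTop).const_mul (4 / 3))
    exact tendsto_nhds_unique hxa hxy


lemma exists_disjoint_balls_noAccumulationIn [CompleteSpace X] {L Y O : Set X} (hLY : L ⊆ Y)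
    (hL : ∀ K, IsCompact K → L ⊆ K → ¬ K ⊆ Y) (hO : IsOpen O) (hLO : L ⊆ O) :
    ∃ (c : ℕ → X) (δ : ℕ → ℝ), (∀ j, c j ∈ L ∧ 0 < δ j ∧ ball (c j) (δ j) ⊆ O) ∧
      Pairwise (Disjoint on fun j => ball (c j) (δ j)) ∧
      NoAccumulationIn (fun j => ball (c j) (δ j)) Y := by
  suffices ∃ (c : ℕ → X) (r : ℕ → ℝ), (∀ j, c j ∈ L ∧ 0 < r j) ∧
      Pairwise (Disjoint on fun j => ball (c j) (r j)) ∧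
      NoAccumulationIn (fun j => ball (c j) (r j)) Y by
    obtain ⟨c, r, hc, hdisj, hacc⟩ := this
    choose ρ hρ hρO using fun j => Metric.isOpen_iff.1 hO _ (hLO (hc j).1)
    have hsub : ∀ j, ball (c j) (min (r j) (ρ j)) ⊆ ball (c j) (r j) :=
      fun j => ball_subset_ball (min_le_left _ _)
    exact ⟨c, fun j => min (r j) (ρ j), fun j => ⟨(hc j).1, lt_min (hc j).2 (hρ j),
      (ball_subset_ball (min_le_right _ _)).trans (hρO j)⟩,
      fun i j hij => (hdisj hij).mono (hsub i) (hsub j), hacc.mono hsub subset_rfl⟩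
  rcases exists_separated_or_tendsto_notMem hL with
    ⟨ε, hε, c, hcL, hsep⟩ | ⟨y, hyY, c, hcL, hcy⟩
  · obtain ⟨hdisj, hacc⟩ := noAccumulationIn_ball_of_separated hsep
    exact ⟨c, fun _ => ε / 3, fun j => ⟨hcL j, by positivity⟩, hdisj,
      hacc.mono (fun _ => subset_rfl) (subset_univ Y)⟩
  · have hne : ∀ j, c j ≠ y := fun j h => hyY (h ▸ hLY (hcL j))
    obtain ⟨u, hdisj, hacc⟩ := exists_noAccumulationIn_ball_of_tendsto hcy hne
    exact ⟨c ∘ u, fun j => dist (c (u j)) y / 3, fun j => ⟨hcL (u j), by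
      have := dist_pos.2 (hne (u j)); positivity⟩, hdisj, hacc.mono (fun _ => subset_rfl)
      fun a ha h => hyY (h ▸ ha)⟩

end Metric

section Covering

variable {X : Type*} [TopologicalSpace X]

def CoveredBySigmaCompactIn (A S : Set X) : Prop :=
  ∃ T ⊆ A, IsSigmaCompact T ∧ S ⊆ T

lemma CoveredBySigmaCompactIn.mono {A S T : Set X} (hT : CoveredBySigmaCompactIn A T)
    (hST : S ⊆ T) : CoveredBySigmaCompactIn A S :=
  let ⟨K, hKA, hK, hTK⟩ := hT
  ⟨K, hKA, hK, hST.trans hTK⟩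

lemma CoveredBySigmaCompactIn.union {A S T : Set X} (hS : CoveredBySigmaCompactIn A S)
    (hT : CoveredBySigmaCompactIn A T) : CoveredBySigmaCompactIn A (S ∪ T) :=
  let ⟨K, hKA, hK, hSK⟩ := hS
  let ⟨K', hK'A, hK', hTK'⟩ := hT
  ⟨K ∪ K', union_subset hKA hK'A, union_eq_iUnion ▸ isSigmaCompact_iUnion _ (Bool.rec hK' hK),
    union_subset_union hSK hTK'⟩

lemma coveredBySigmaCompactIn_biUnion {ι : Type*} {A : Set X} {I : Set ι} {S : ι → Set X}
    (hI : I.Countable) (hS : ∀ i ∈ I, CoveredBySigmaCompactIn A (S i)) :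
    CoveredBySigmaCompactIn A (⋃ i ∈ I, S i) := by
  choose! K hKA hK hSK using hS
  exact ⟨⋃ i ∈ I, K i, iUnion₂_subset hKA, isSigmaCompact_biUnion hI hK,
    iUnion₂_mono hSK⟩

/-- A point of `S` lies either on a branch all of whose cylinders have uncovered image, or in one
of the countably many cylinders whose image is covered. -/
lemma CoveredBySigmaCompactIn.of_image_branches {f : (ℕ → ℕ) → X} {S : Set (ℕ → ℕ)}
    (h : CoveredBySigmaCompactIn (range f)
      (f '' {σ ∈ S | ∀ n, ¬ CoveredBySigmaCompactIn (range f) (f '' cylinder σ n)})) :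
    CoveredBySigmaCompactIn (range f) (f '' S) := by
  let 𝒞 := {C | (∃ x n, C = cylinder x n) ∧ CoveredBySigmaCompactIn (range f) (f '' C)}
  refine (h.union (coveredBySigmaCompactIn_biUnion (I := 𝒞)
    (countable_setOf_cylinder.mono fun _ hC => hC.1) fun _ hC => hC.2)).mono ?_
  rintro _ ⟨σ, hσ, rfl⟩
  by_cases hbranch : ∀ n, ¬ CoveredBySigmaCompactIn (range f) (f '' cylinder σ n)
  · exact .inl ⟨σ, ⟨hσ, hbranch⟩, rfl⟩
  · obtain ⟨n, hn⟩ := not_forall_not.1 hbranch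
    exact .inr <| mem_biUnion (x := cylinder σ n) ⟨⟨σ, n, rfl⟩, hn⟩
      ⟨σ, self_mem_cylinder σ n, rfl⟩

end Covering

section Hurewicz

variable {X : Type*} [MetricSpace X] {f : (ℕ → ℕ) → X}

structure Piece (f : (ℕ → ℕ) → X) where
  center : ℕ → ℕ
  depth : ℕ
  nbhd : Set X
  not_covered : ¬ CoveredBySigmaCompactIn (range f) (f '' cylinder center depth)
  isOpen_nbhd : IsOpen nbhd
  image_subset : f '' cylinder center depth ⊆ nbhd

namespace Piece

abbrev cyl (P : Piece f) : Set (ℕ → ℕ) := cylinder P.center P.depth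

theorem exists_children [CompleteSpace X] (hf : Continuous f) (P : Piece f) :
    ∃ c : ℕ → Piece f,
      (∀ j, (c j).cyl ⊆ P.cyl ∧ P.depth < (c j).depth ∧ (c j).nbhd ⊆ P.nbhd) ∧
      Pairwise (Disjoint on fun j => (c j).nbhd) ∧
      NoAccumulationIn (fun j => (c j).nbhd) (range f) := by
  let B := {σ ∈ P.cyl | ∀ n, ¬ CoveredBySigmaCompactIn (range f) (f '' cylinder σ n)}
  have hB : ∀ K, IsCompact K → f '' B ⊆ K → ¬ K ⊆ range f := fun K hK hBK hKf =>
    P.not_covered <| CoveredBySigmaCompactIn.of_image_branches ⟨K, hKf, hK.isSigmaCompact, hBK⟩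
  obtain ⟨c, δ, hc, hdisj, hacc⟩ := exists_disjoint_balls_noAccumulationIn
    (image_subset_range f B) hB P.isOpen_nbhd ((image_mono (sep_subset _ _)).trans P.image_subset)
  choose σ hσB hσc using fun j => (hc j).1
  obtain rfl : c = f ∘ σ := funext fun j => (hσc j).symm
  choose n hn using fun j => exists_cylinder_subset_of_mem_nhds <|
    hf.continuousAt.preimage_mem_nhds (ball_mem_nhds (f (σ j)) (hc j).2.1)
  let N j := max (n j) (P.depth + 1)
  refine ⟨fun j => ⟨σ j, N j, ball (f (σ j)) (δ j), (hσB j).2 _, isOpen_ball,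
    image_subset_iff.2 <| (cylinder_anti _ (le_max_left _ _)).trans (hn j)⟩,
    fun j => ⟨?_, Nat.lt_of_succ_le (le_max_right _ _), (hc j).2.2⟩, hdisj, hacc⟩
  show cylinder (σ j) (N j) ⊆ cylinder P.center P.depth
  rw [← mem_cylinder_iff_eq.1 (hσB j).1]
  exact cylinder_anti _ (le_max_of_le_right (Nat.le_succ _))

variable [CompleteSpace X] (hf : Continuous f)

noncomputable def child (P : Piece f) : ℕ → Piece f := (P.exists_children hf).choose

lemma child_spec (P : Piece f) :
    (∀ j, (P.child hf j).cyl ⊆ P.cyl ∧ P.depth < (P.child hf j).depth ∧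
      (P.child hf j).nbhd ⊆ P.nbhd) ∧
    Pairwise (Disjoint on fun j => (P.child hf j).nbhd) ∧
    NoAccumulationIn (fun j => (P.child hf j).nbhd) (range f) :=
  (P.exists_children hf).choose_spec

/-- Addresses are finite sequences written in reverse, as produced by `PiNat.res`. -/
noncomputable def tree (P : Piece f) : List ℕ → Piece f
  | [] => P
  | j :: t => (P.tree t).child hf j

variable (P : Piece f)

lemma le_depth_tree_res (σ : ℕ → ℕ) (n : ℕ) : n ≤ (P.tree hf (res σ n)).depth := by
  induction n with
  | zero => exact Nat.zero_le _
  | succ n ih => exact ih.trans_lt ((child_spec hf _).1 (σ n)).2.1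

lemma cyl_tree_res_anti (σ : ℕ → ℕ) : Antitone fun n => (P.tree hf (res σ n)).cyl :=
  antitone_nat_of_succ_le fun n => ((child_spec hf _).1 (σ n)).1

lemma nbhd_tree_res_anti (σ : ℕ → ℕ) : Antitone fun n => (P.tree hf (res σ n)).nbhd :=
  antitone_nat_of_succ_le fun n => ((child_spec hf _).1 (σ n)).2.2

/-- The common point of the cylinders along the branch `σ`. -/
noncomputable def limit (σ : ℕ → ℕ) : ℕ → ℕ := fun i => (P.tree hf (res σ (i + 1))).center i

lemma limit_mem_cyl (σ : ℕ → ℕ) (n : ℕ) : P.limit hf σ ∈ (P.tree hf (res σ n)).cyl := by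
  refine mem_cylinder_iff.2 fun i hi => ?_
  have hcenter : ∀ m ≤ max n (i + 1), i < (P.tree hf (res σ m)).depth →
      (P.tree hf (res σ (max n (i + 1)))).center i = (P.tree hf (res σ m)).center i :=
    fun m hm him =>
      mem_cylinder_iff.1 (P.cyl_tree_res_anti hf σ hm (self_mem_cylinder _ _)) i him
  rw [limit, ← hcenter (i + 1) (le_max_right _ _) (P.le_depth_tree_res hf σ _), hcenter n
    (le_max_left _ _) hi]

lemma continuous_limit : Continuous (P.limit hf) :=
  continuous_pi fun i => continuous_comp_res (fun t => (P.tree hf t).center i) (i + 1)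

lemma mem_nbhd_tree_res (σ : ℕ → ℕ) (n : ℕ) : f (P.limit hf σ) ∈ (P.tree hf (res σ n)).nbhd :=
  (P.tree hf _).image_subset ⟨_, P.limit_mem_cyl hf σ n, rfl⟩

/-- Siblings have disjoint neighbourhoods, so the neighbourhoods containing `f (limit τ)` read
off `τ`. -/
lemma res_eq_of_mem_nbhd {σ τ : ℕ → ℕ} {n : ℕ}
    (h : f (P.limit hf τ) ∈ (P.tree hf (res σ n)).nbhd) : res τ n = res σ n := by
  induction n with
  | zero => rfl
  | succ n ih =>
    have hn := ih (P.nbhd_tree_res_anti hf σ n.le_succ h)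
    have hτ := P.mem_nbhd_tree_res hf τ (n + 1)
    simp only [res_succ, tree, hn] at h hτ ⊢
    by_contra hne
    have hsib := (child_spec hf (P.tree hf (res σ n))).2.1 fun h' =>
      hne (congrArg (· :: res σ n) h'.symm)
    exact hsib.ne_of_mem h hτ rfl

lemma injective_comp_limit : Injective (f ∘ P.limit hf) := by
  intro τ σ h
  refine res_injective <| funext fun n => P.res_eq_of_mem_nbhd hf ?_
  rw [← comp_apply (f := f), h]
  exact P.mem_nbhd_tree_res hf σ n

lemma isEmbedding_comp_limit : IsEmbedding (f ∘ P.limit hf) := by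
  refine ⟨⟨le_antisymm (hf.comp (P.continuous_limit hf)).le_induced ?_⟩,
    P.injective_comp_limit hf⟩
  rw [(isTopologicalBasis_cylinders fun _ => ℕ).eq_generateFrom]
  refine le_generateFrom ?_
  rintro _ ⟨σ, n, rfl⟩
  refine isOpen_induced_iff.2 ⟨_, (P.tree hf (res σ n)).isOpen_nbhd, Set.ext fun τ => ?_⟩
  rw [cylinder_eq_res]
  exact ⟨P.res_eq_of_mem_nbhd hf, fun h => h ▸ P.mem_nbhd_tree_res hf τ n⟩

/-- If `f (limit (σ k)) → a ∈ range f`, the `σ k` cannot pass through infinitely many children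
of one node (`NoAccumulationIn`), so they stay in a compact set. -/
lemma closure_range_inter_subset :
    closure (range (f ∘ P.limit hf)) ∩ range f ⊆ range (f ∘ P.limit hf) := by
  rintro a ⟨ha, haf⟩
  obtain ⟨y, hy, hya⟩ := mem_closure_iff_seq_limit.1 ha
  choose σ hσ using hy
  obtain rfl : y = fun k => f (P.limit hf (σ k)) := funext fun k => (hσ k).symm
  rcases exists_isCompact_or_infinite_branching σ with ⟨K, hK, hσK⟩ | ⟨n, s, hinf⟩
  · refine image_subset_range _ K <| (hK.image (hf.comp (P.continuous_limit hf))).isClosed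
      |>.mem_of_tendsto hya (Eventually.of_forall fun k => mem_image_of_mem _ (hσK k))
  · let m := hinf.natEmbedding
    choose k hk using fun j => (m j).2
    have hk_inj : Injective k := fun i j hij => m.injective <| Subtype.ext <|
      List.head_eq_of_cons_eq ((hk i).symm.trans (hij ▸ hk j))
    refine absurd (hya.comp hk_inj.nat_tendsto_atTop) <| ((P.tree hf s).child_spec hf).2.2
      (fun j => m j) (Subtype.val_injective.comp m.injective) _ (fun j => ?_) a haf
    have := P.mem_nbhd_tree_res hf (σ (k j)) (n + 1)
    rwa [hk j] at this

end Piece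

end Hurewicz

theorem exists_isEmbedding_nat_nat_of_not_isSigmaCompact_range {X : Type*} [MetricSpace X]
    [CompleteSpace X] {f : (ℕ → ℕ) → X} (hf : Continuous f) (h : ¬ IsSigmaCompact (range f)) :
    ∃ e : (ℕ → ℕ) → X, IsEmbedding e ∧ range e ⊆ range f ∧
      closure (range e) ∩ range f ⊆ range e := by
  have hroot : ¬ CoveredBySigmaCompactIn (range f) (f '' cylinder (fun _ => 0) 0) :=
    fun ⟨T, hTf, hT, hfT⟩ => h <| by
      rwa [Subset.antisymm hTf (by simpa [cylinder_zero] using hfT)] at hT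
  let root : Piece f := ⟨fun _ => 0, 0, univ, hroot, isOpen_univ, subset_univ _⟩
  exact ⟨f ∘ root.limit hf, root.isEmbedding_comp_limit hf, range_comp_subset_range _ _,
    root.closure_range_inter_subset hf⟩

theorem isSigmaCompact_range_of_mengerSpace {X : Type*} [MetricSpace X] [CompleteSpace X]
    {f : (ℕ → ℕ) → X} (hf : Continuous f) (hM : MengerSpace (range f)) :
    IsSigmaCompact (range f) := by
  by_contra h
  obtain ⟨e, he, hef, hclosed⟩ := exists_isEmbedding_nat_nat_of_not_isSigmaCompact_range hf h
  exact not_mengerSpace_nat_nat (hM.of_isEmbedding he hef hclosed)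

/-- Every analytic subspace of a Polish space that has the Menger property is
σ-compact. -/
theorem menger_analyticSet_sigmaCompact (X : Type*) [TopologicalSpace X] [PolishSpace X]
    (A : Set X) (hA : MeasureTheory.AnalyticSet A) (hMenger : MengerSpace ↥A) :
    IsSigmaCompact A := by
  rw [MeasureTheory.AnalyticSet] at hA
  rcases hA with rfl | ⟨f, hf, rfl⟩
  · exact isSigmaCompact_empty
  · let := TopologicalSpace.upgradeIsCompletelyMetrizable X
    exact isSigmaCompact_range_of_mengerSpace hf hMenger
end

section
/- If a T1 topological space X is od-compact, then the set of non-isolated points of X is compact. -/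
/-!
Let `N` be the closed set of non-isolated points and suppose it is not compact. Well-ordering an
open cover of `N` of minimal cardinality yields an increasing open cover `(W i)` of `N` such that
no `N \ W i` is compact. In an od-compact space closed nowhere dense sets are compact, so the open
sets `E i = interior (N \ W i)` are nonempty; they decrease, and every point eventually leaves
their closures. Pick `x i ∈ E i` and an index `β i` past which `x i` has left; a cofinal set of
indices `i` whose intervals `[i, β i)` are pairwise disjoint gives a discrete set of non-isolated
points. Its closure is nowhere dense, hence compact, yet it meets the closure of every `E i`, and these closed sets have empty intersection.
-/

open Set Cardinal

universe u

/-- A space is od-compact if every cover by open dense subsets has a finite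
subcover. -/
def OdCompact (X : Type*) [TopologicalSpace X] : Prop :=
  ∀ 𝒰 : Set (Set X), (∀ U ∈ 𝒰, IsOpen U ∧ Dense U) → ⋃₀ 𝒰 = Set.univ →
    ∃ ℱ ⊆ 𝒰, ℱ.Finite ∧ ⋃₀ ℱ = Set.univ

theorem isClosed_setOf_not_isOpen_singleton (X : Type*) [TopologicalSpace X] :
    IsClosed {x : X | ¬IsOpen ({x} : Set X)} :=
  isOpen_compl_iff.1 <| isOpen_iff_forall_mem_open.2 fun x hx =>
    ⟨{x}, singleton_subset_iff.2 hx, not_not.1 hx, rfl⟩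

theorem OdCompact.isCompact_of_isClosed_of_isNowhereDense {X : Type*} [TopologicalSpace X]
    (h : OdCompact X) {K : Set X} (hKc : IsClosed K) (hKn : IsNowhereDense K) :
    IsCompact K := by
  have hdense : Dense Kᶜ := (isClosed_isNowhereDense_iff_compl.1 ⟨hKc, hKn⟩).2
  refine isCompact_generateFrom (TopologicalSpace.generateFrom_setOfPred_isOpen _).symm
    fun P hP hKP => ?_
  have hopen : ∀ U ∈ insert ∅ P, IsOpen U := by
    rintro U (rfl | hU)
    exacts [isOpen_empty, hP hU]
  have hcover : ⋃₀ ((· ∪ Kᶜ) '' insert ∅ P) = Set.univ := by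
    refine eq_univ_of_forall fun x => ?_
    by_cases hx : x ∈ K
    · obtain ⟨U, hUP, hxU⟩ := hKP hx
      exact ⟨_, mem_image_of_mem _ (mem_insert_of_mem _ hUP), Or.inl hxU⟩
    · exact ⟨_, mem_image_of_mem _ (mem_insert ∅ P), Or.inr hx⟩
  obtain ⟨Q, hQP, hQfin, hQcov⟩ := exists_subset_image_finite_and.1 <|
    h _ (forall_mem_image.2 fun U hU =>
      ⟨(hopen U hU).union hKc.isOpen_compl, hdense.mono subset_union_right⟩) hcover
  refine ⟨Q \ {∅}, sdiff_singleton_subset_iff.2 hQP, hQfin.sdiff, fun x hx => ?_⟩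
  obtain ⟨_, ⟨U, hUQ, rfl⟩, hxU⟩ := hQcov.symm ▸ mem_univ x
  have hxU : x ∈ U := hxU.resolve_right (not_not.2 hx)
  exact ⟨U, ⟨hUQ, (nonempty_of_mem hxU).ne_empty⟩, hxU⟩

theorem exists_monotone_open_cover_not_isCompact_diff {X : Type u} [TopologicalSpace X]
    {K : Set X} (hK : ¬IsCompact K) :
    ∃ (ι : Type u) (_ : LinearOrder ι) (W : ι → Set X), (∀ i, IsOpen (W i)) ∧ Monotone W ∧
      K ⊆ ⋃ i, W i ∧ ∀ i, ¬IsCompact (K \ W i) := by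
  obtain ⟨ι₀, V, hVo, hKV, hVfin⟩ : ∃ (ι₀ : Type u) (V : ι₀ → Set X), (∀ i, IsOpen (V i)) ∧
      K ⊆ ⋃ i, V i ∧ ∀ t : Finset ι₀, ¬K ⊆ ⋃ i ∈ t, V i := by
    contrapose! hK
    exact isCompact_of_finite_subcover fun U hU hKU => hK _ U hU hKU
  let covers : Set (Set ι₀) := {s | K ⊆ ⋃ i ∈ s, V i}
  have hcovers : covers.Nonempty := ⟨Set.univ, by simpa [covers] using hKV⟩
  set s := Function.argminOn (fun s : Set ι₀ => #s) covers hcovers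
  have hs : K ⊆ ⋃ i ∈ s, V i := Function.argminOn_mem _ covers hcovers
  have hmin : ∀ s' ∈ covers, #s ≤ #s' := fun _ hs' => Function.argminOn_le (fun s : Set ι₀ => #s) covers hs'
  have hκ : ℵ₀ ≤ #s := by
    by_contra! hfin
    exact hVfin (lt_aleph0_iff_set_finite.1 hfin).toFinset (by simpa using hs)
  obtain ⟨e⟩ : Nonempty ((#s).ord.ToType ≃ s) := Cardinal.eq.1 (by simp)
  refine ⟨(#s).ord.ToType, inferInstance, fun j => ⋃ k ≤ j, V (e k),
    fun j => isOpen_biUnion fun k _ => hVo _,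
    fun j j' hjj' => biUnion_mono (fun _ hk => le_trans hk hjj') fun _ _ => subset_rfl,
    fun x hx => ?_, fun j hj => ?_⟩
  · obtain ⟨i, his, hxi⟩ := mem_iUnion₂.1 (hs hx)
    exact mem_iUnion.2 ⟨e.symm ⟨i, his⟩, mem_iUnion₂.2 ⟨_, le_rfl, by simpa using hxi⟩⟩
  obtain ⟨t, ht⟩ := hj.elim_finite_subcover V hVo (sdiff_subset.trans hKV)
  have hcov : (fun k => (e k : ι₀)) '' Iic j ∪ t ∈ covers := fun x hx => by
    by_cases hxW : x ∈ ⋃ k ≤ j, V (e k)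
    · obtain ⟨k, hk, hxk⟩ := mem_iUnion₂.1 hxW
      exact mem_iUnion₂.2 ⟨_, Or.inl (mem_image_of_mem _ hk), hxk⟩
    · obtain ⟨i, hi, hxi⟩ := mem_iUnion₂.1 (ht ⟨hx, hxW⟩)
      exact mem_iUnion₂.2 ⟨i, Or.inr hi, hxi⟩
  have hIic : #(Iic j) < #s := by
    rw [← Iio_insert]
    refine mk_insert_le.trans_lt (add_lt_of_lt hκ ?_ (one_lt_aleph0.trans_le hκ))
    simpa using mk_Iio_lt j
  refine (hmin _ hcov).not_gt ((mk_union_le _ _).trans_lt ?_)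
  exact add_lt_of_lt hκ (mk_image_le.trans_lt hIic) (t.finite_toSet.lt_aleph0.trans_le hκ)

theorem exists_isCofinal_pairwise_le_or_le {ι : Type*} [LinearOrder ι] (β : ι → ι) :
    ∃ J : Set ι, IsCofinal J ∧ J.Pairwise fun i j => β i ≤ j ∨ β j ≤ i := by
  obtain ⟨J, hJ⟩ := zorn_subset {J : Set ι | J.Pairwise fun i j => β i ≤ j ∨ β j ≤ i}
    fun c hc hchain => ⟨⋃₀ c, (hchain.pairwise_sUnion).2 hc, fun _ => subset_sUnion_of_mem⟩
  refine ⟨J, fun s => ?_, hJ.prop⟩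
  by_contra! hJs
  -- at most one interval `[i, β i)` with `i ∈ J` contains `s`; start a new one past it
  obtain ⟨t, hst, ht⟩ : ∃ t, s ≤ t ∧ ∀ i ∈ J, β i ≤ t := by
    by_cases hlong : ∃ i ∈ J, s < β i
    · obtain ⟨i, hiJ, hi⟩ := hlong
      refine ⟨β i, hi.le, fun j hjJ => ?_⟩
      by_contra! hij
      rcases hJ.prop hjJ hiJ (by rintro rfl; exact hij.false) with hj | hj
      · exact ((hj.trans_lt (hJs i hiJ)).trans (hi.trans hij)).false
      · exact ((hj.trans_lt (hJs j hjJ)).trans hi).false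
    · push Not at hlong
      exact ⟨s, le_rfl, hlong⟩
  have htJ : t ∉ J := fun htJ => (hJs t htJ).not_ge hst
  have hinsert : (insert t J).Pairwise fun i j => β i ≤ j ∨ β j ≤ i :=
    hJ.prop.insert fun i hiJ _ => ⟨Or.inr (ht i hiJ), Or.inl (ht i hiJ)⟩
  exact htJ (hJ.eq_of_subset hinsert (subset_insert t J) ▸ mem_insert t J)

theorem isNowhereDense_of_forall_isolatedIn {X : Type*} [TopologicalSpace X] [T1Space X]
    {S : Set X}
    (hS : ∀ x ∈ S, ∃ U, IsOpen U ∧ x ∈ U ∧ U ∩ S ⊆ {x})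
    (hnotIso : ∀ x ∈ S, ¬IsOpen ({x} : Set X)) : IsNowhereDense S := by
  refine eq_empty_iff_forall_notMem.2 fun y hy => ?_
  obtain ⟨x, hxW, hxS⟩ := mem_closure_iff.1 (interior_subset hy) _ isOpen_interior hy
  obtain ⟨U, hU, hxU, hUS⟩ := hS x hxS
  have hsingleton : interior (closure S) ∩ U = {x} := by
    refine Subset.antisymm ?_ (singleton_subset_iff.2 ⟨hxW, hxU⟩)
    calc interior (closure S) ∩ U ⊆ U ∩ closure S := fun z hz => ⟨hz.2, interior_subset hz.1⟩
      _ ⊆ closure (U ∩ S) := hU.inter_closure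
      _ ⊆ {x} := by simpa using closure_mono hUS
  exact hnotIso x hxS (hsingleton ▸ isOpen_interior.inter hU)

section Escaping

variable {X : Type*} [TopologicalSpace X] {ι : Type*} [LinearOrder ι] {E : ι → Set X}

theorem exists_isolatedIn_subset_meeting_of_antitone (hE : Antitone E)
    (hEo : ∀ i, IsOpen (E i)) (hne : ∀ i, (E i).Nonempty)
    (hesc : ∀ x, ∃ i, x ∉ closure (E i)) :
    ∃ S ⊆ ⋃ i, E i, (∀ x ∈ S, ∃ U, IsOpen U ∧ x ∈ U ∧ U ∩ S ⊆ {x}) ∧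
      ∀ i, (S ∩ E i).Nonempty := by
  choose x hx using hne
  choose β hβ using fun i => hesc (x i)
  obtain ⟨J, hJcof, hJ⟩ := exists_isCofinal_pairwise_le_or_le β
  refine ⟨x '' J, image_subset_iff.2 fun i _ => mem_iUnion_of_mem i (hx i), ?_, fun i => ?_⟩
  · rintro _ ⟨i, hi, rfl⟩
    refine ⟨E i \ closure (E (β i)), (hEo i).sdiff isClosed_closure, ⟨hx i, hβ i⟩, ?_⟩
    rintro _ ⟨⟨hjE, hjcl⟩, j, hj, rfl⟩
    by_contra hxij
    rcases hJ hi hj (by rintro rfl; exact hxij rfl) with hij | hji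
    · exact hjcl (subset_closure (hE hij (hx j)))
    · exact hβ j (subset_closure (hE hji hjE))
  · obtain ⟨j, hj, hij⟩ := hJcof i
    exact ⟨x j, mem_image_of_mem x hj, hE hij (hx j)⟩

theorem exists_isClosed_isNowhereDense_not_isCompact [T1Space X] [Nonempty ι]
    (hE : Antitone E) (hEo : ∀ i, IsOpen (E i)) (hne : ∀ i, (E i).Nonempty)
    (hnotIso : ∀ i, ∀ x ∈ E i, ¬IsOpen ({x} : Set X))
    (hesc : ∀ x, ∃ i, x ∉ closure (E i)) :
    ∃ K : Set X, IsClosed K ∧ IsNowhereDense K ∧ ¬IsCompact K := by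
  obtain ⟨S, hSE, hSiso, hSmeet⟩ := exists_isolatedIn_subset_meeting_of_antitone hE hEo hne hesc
  have hSnotIso : ∀ x ∈ S, ¬IsOpen ({x} : Set X) := fun x hx => by
    obtain ⟨i, hi⟩ := mem_iUnion.1 (hSE hx)
    exact hnotIso i x hi
  refine ⟨closure S, isClosed_closure,
    (isNowhereDense_of_forall_isolatedIn hSiso hSnotIso).closure, fun hK => ?_⟩
  have hanti : Antitone fun i => closure S ∩ closure (E i) :=
    fun i j hij => inter_subset_inter_right _ (closure_mono (hE hij))
  obtain ⟨z, hz⟩ := IsCompact.nonempty_iInter_of_directed_nonempty_isCompact_isClosed _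
    hanti.directed_ge (fun i => (hSmeet i).mono (inter_subset_inter subset_closure subset_closure))
    (fun i => hK.inter_right isClosed_closure) fun i => isClosed_closure.inter isClosed_closure
  obtain ⟨i, hi⟩ := hesc z
  exact hi (mem_iInter.1 hz i).2

end Escaping

/-- If a T1 space is od-compact, then the set of its non-isolated points is
compact. -/
theorem odCompact_nonIsolated_isCompact (X : Type*) [TopologicalSpace X] [T1Space X]
    (h : OdCompact X) : IsCompact {x : X | ¬ IsOpen ({x} : Set X)} := by
  set N := {x : X | ¬IsOpen ({x} : Set X)}
  have hN : IsClosed N := isClosed_setOf_not_isOpen_singleton X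
  by_contra hNc
  obtain ⟨ι, _, W, hWo, hWmono, hNW, hW⟩ := exists_monotone_open_cover_not_isCompact_diff hNc
  have hclosure : ∀ i, closure (interior (N \ W i)) ⊆ N \ W i := fun i =>
    (closure_mono interior_subset).trans (hN.sdiff (hWo i)).closure_subset
  obtain ⟨x₀, hx₀⟩ : N.Nonempty :=
    nonempty_iff_ne_empty.2 fun hN₀ => hNc (hN₀ ▸ isCompact_empty)
  obtain ⟨i₀, -⟩ := mem_iUnion.1 (hNW hx₀)
  have : Nonempty ι := ⟨i₀⟩
  have hnotNowhereDense : ∀ i, ¬IsNowhereDense (N \ W i) := fun i hnd =>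
    hW i (h.isCompact_of_isClosed_of_isNowhereDense (hN.sdiff (hWo i)) hnd)
  have hesc : ∀ x, ∃ i, x ∉ closure (interior (N \ W i)) := fun x => by
    by_cases hx : x ∈ N
    · obtain ⟨i, hi⟩ := mem_iUnion.1 (hNW hx)
      exact ⟨i, fun hcl => (hclosure i hcl).2 hi⟩
    · exact ⟨i₀, fun hcl => hx (hclosure i₀ hcl).1⟩
  obtain ⟨K, hKc, hKn, hK⟩ := exists_isClosed_isNowhereDense_not_isCompact
    (fun i j hij => interior_mono (sdiff_subset_sdiff_right (hWmono hij)))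
    (fun _ => isOpen_interior)
    (fun i => nonempty_iff_ne_empty.2 fun he =>
      hnotNowhereDense i ((hN.sdiff (hWo i)).isNowhereDense_iff.2 he))
    (fun i x hx => (interior_subset hx).1) hesc
  exact hK (h.isCompact_of_isClosed_of_isNowhereDense hKc hKn)
end
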